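/- For a positive integer m, nonzero real λ, and nonnegative integers n ≥ i ≥ 0, the degenerate Whitney numbers of the first kind satisfy V_{m,λ}(n,i) = ∑_{k=i}^{n} (−1)^{k−i}·C(k,i)·m^{n−k}·S_{1,λ/m}(n,k)·⟨1⟩_{k−i,λ}, where S_{1,λ/m} are the degenerate Stirling numbers of the first kind with parameter λ/m. -/

import Mathlib

open Finset

noncomputable def dff (lam x : ℝ) (n : ℕ) : ℝ := ∏ i ∈ Finset.range n, (x - i * lam)

noncomputable def drf (lam x : ℝ) (n : ℕ) : ℝ := ∏ i ∈ Finset.range n, (x + i * lam)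

/-! Since `(m x)_{k,λ} = m^k (x)_{k,λ/m}`, expanding `(x)_n` by `S_{1,λ/m}` writes `m^n (x)_n` in
the falling factorials `(m x)_{k,λ}`. The degenerate Vandermonde identity applied to
`m x = (m x + 1) + (-1)`, together with `(-1)_{j,λ} = (-1)^j ⟨1⟩_{j,λ}`, re-expands these in the
basis `(m x + 1)_{i,λ}`, and coefficients in that basis are unique because `λ ≠ 0`. -/

lemma dff_succ (lam x : ℝ) (k : ℕ) : dff lam x (k + 1) = dff lam x k * (x - k * lam) :=
  prod_range_succ _ _

theorem dff_add (lam x y : ℝ) (k : ℕ) :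
    dff lam (x + y) k =
      ∑ ij ∈ antidiagonal k, (k.choose ij.1 : ℝ) * (dff lam x ij.1 * dff lam y ij.2) := by
  induction k with
  | zero => simp [dff]
  | succ k ih =>
    rw [sum_antidiagonal_choose_succ_mul (fun i j => dff lam x i * dff lam y j),
      ← sum_add_distrib, dff_succ, ih, sum_mul]
    refine sum_congr rfl fun ij hij => ?_
    rw [HasAntidiagonal.mem_antidiagonal] at hij
    have hk : (k : ℝ) = ij.1 + ij.2 := by exact_mod_cast hij.symm
    rw [dff_succ, dff_succ, ← Nat.choose_symm_of_eq_add hij.symm, hk]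
    ring

lemma dff_neg_one (lam : ℝ) (j : ℕ) : dff lam (-1) j = (-1) ^ j * drf lam 1 j := by
  rw [dff, drf, ← card_range j, ← prod_const, card_range, ← prod_mul_distrib]
  exact prod_congr rfl fun _ _ => by ring

theorem dff_eq_sum_dff_add_one (lam y : ℝ) (k : ℕ) :
    dff lam y k = ∑ i ∈ range (k + 1),
      (-1) ^ (k - i) * (k.choose i : ℝ) * drf lam 1 (k - i) * dff lam (y + 1) i := by
  conv_lhs =>
    rw [show y = (y + 1) + -1 by ring, dff_add, Nat.sum_antidiagonal_eq_sum_range_succ_mk]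
  exact sum_congr rfl fun i _ => by rw [dff_neg_one]; ring

lemma pow_mul_dff_div (lam x : ℝ) {m : ℝ} (hm : m ≠ 0) (k : ℕ) :
    m ^ k * dff (lam / m) x k = dff lam (m * x) k := by
  rw [dff, dff, ← card_range k, ← prod_const, card_range, ← prod_mul_distrib]
  exact prod_congr rfl fun _ _ => by field_simp

theorem pow_mul_sum_dff_div_eq (lam : ℝ) {m : ℝ} (hm : m ≠ 0) (s : ℕ → ℝ) (n : ℕ) (x : ℝ) :
    m ^ n * ∑ k ∈ range (n + 1), s k * dff (lam / m) x k =
      ∑ i ∈ range (n + 1), (∑ k ∈ Icc i n, (-1) ^ (k - i) * (k.choose i : ℝ) *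
        m ^ (n - k) * s k * drf lam 1 (k - i)) * dff lam (m * x + 1) i := by
  have hterm : ∀ k ∈ range (n + 1), m ^ n * (s k * dff (lam / m) x k) =
      ∑ i ∈ range (k + 1), (-1) ^ (k - i) * (k.choose i : ℝ) *
        m ^ (n - k) * s k * drf lam 1 (k - i) * dff lam (m * x + 1) i := by
    intro k hk
    rw [← Nat.sub_add_cancel (mem_range_succ_iff.mp hk), pow_add, Nat.add_sub_cancel]
    rw [show m ^ (n - k) * m ^ k * (s k * dff (lam / m) x k) =
        m ^ (n - k) * s k * (m ^ k * dff (lam / m) x k) by ring,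
      pow_mul_dff_div lam x hm, dff_eq_sum_dff_add_one, mul_sum]
    exact sum_congr rfl fun i _ => by ring
  rw [mul_sum, sum_congr rfl hterm, sum_comm' (t' := range (n + 1)) (s' := fun i => Icc i n)
    (fun k i => by simp only [mem_range, mem_Icc]; omega)]
  exact sum_congr rfl fun i _ => (sum_mul ..).symm

lemma dff_nat_mul_self_ne_zero {lam : ℝ} (hlam : lam ≠ 0) (i : ℕ) : dff lam (i * lam) i ≠ 0 := by
  refine prod_ne_zero_iff.mpr fun t ht h => ?_
  have : (i : ℝ) = t := mul_right_cancel₀ hlam (sub_eq_zero.mp h)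
  exact (mem_range.mp ht).ne' (by exact_mod_cast this)

lemma dff_nat_mul_eq_zero (lam : ℝ) {i k : ℕ} (hik : i < k) : dff lam (i * lam) k = 0 :=
  prod_eq_zero (mem_range.mpr hik) (sub_self _)

theorem eq_zero_of_sum_mul_dff_eq_zero {lam : ℝ} (hlam : lam ≠ 0) {n : ℕ} {c : ℕ → ℝ}
    (h : ∀ z, ∑ k ∈ range (n + 1), c k * dff lam z k = 0) {i : ℕ} (hi : i ≤ n) : c i = 0 := by
  induction i using Nat.strong_induction_on with
  | _ i ih =>
    -- `z = i λ` is a root of every `(z)_{k,λ}` with `k > i`, but not of `(z)_{i,λ}`.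
    have hz := h (i * lam)
    rw [sum_eq_single_of_mem i (mem_range_succ_iff.mpr hi) fun k hk hki => ?_] at hz
    · exact (mul_eq_zero.mp hz).resolve_right (dff_nat_mul_self_ne_zero hlam i)
    rcases hki.lt_or_gt with hlt | hgt
    · rw [ih k hlt (mem_range_succ_iff.mp hk), zero_mul]
    · rw [dff_nat_mul_eq_zero lam hgt, mul_zero]

theorem stmt12 (m : ℕ) (hm : 1 ≤ m) (lam : ℝ) (hlam : lam ≠ 0) (V S1 : ℕ → ℕ → ℝ)
    (hV : ∀ (x : ℝ) (n : ℕ), (m : ℝ) ^ n * dff 1 x n =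
      ∑ k ∈ Finset.range (n + 1), V n k * dff lam ((m : ℝ) * x + 1) k)
    (hS1 : ∀ (x : ℝ) (n : ℕ), dff 1 x n =
      ∑ k ∈ Finset.range (n + 1), S1 n k * dff (lam / m) x k)
    (n i : ℕ) (hi : i ≤ n) :
    V n i = ∑ k ∈ Finset.Icc i n, (-1 : ℝ) ^ (k - i) * (Nat.choose k i : ℝ) *
      (m : ℝ) ^ (n - k) * S1 n k * drf lam 1 (k - i) := by
  have hm0 : (m : ℝ) ≠ 0 := Nat.cast_ne_zero.mpr (by omega)
  refine sub_eq_zero.mp (eq_zero_of_sum_mul_dff_eq_zero hlam (c := fun i => V n i -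
    ∑ k ∈ Icc i n, (-1) ^ (k - i) * (k.choose i : ℝ) * (m : ℝ) ^ (n - k) * S1 n k *
      drf lam 1 (k - i)) (fun z => ?_) hi)
  obtain ⟨x, rfl⟩ : ∃ x, z = m * x + 1 := ⟨(z - 1) / m, by field_simp; ring⟩
  have hexpand := pow_mul_sum_dff_div_eq lam hm0 (S1 n) n x
  rw [← hS1, hV] at hexpand
  simp only [sub_mul, sum_sub_distrib, hexpand, sub_self]
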